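/- arXiv:2303.03479 — 2 statements merged into one kernel-verified Lean document; each statement's English description precedes it below -/
import Mathlib

section
/- Let G be a 2-tough non-Hamiltonian graph on n ≥ 3 vertices possessing a Hamiltonian path v_1, v_2, …, v_n with x = v_1 and y = v_n non-adjacent and d(x) + d(y) = n − 1. Let S be the set of vertices adjacent to neither x nor y. Then for every v_i ∈ S, every neighbor of v_i is of the form v_j with either j < i and v_{j+1} ∈ S, or j > i and v_{j−1} ∈ S. -/
/-!
Write `x = v 1` and `y = v n`. For `1 ≤ k < n` the edges `x v (k + 1)` and `v k y` cannot both
exist: reversing the initial segment `v 1 … v k` (a Pósa rotation) would give a Hamiltonian path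
from `v k` to `y`, closed by `v k y`. Since `d(x) + d(y) = n - 1` equals the number of such `k`,
exactly one of the two edges exists for each `k`. For `v i ∈ S` this yields `x ~ v (i + 1)` and
`v (i - 1) ~ y`, and then for a neighbour `v j` of `v i` with `j + 1 < i`, an edge from `v (j + 1)`
to `x` or to `y` closes a Hamiltonian cycle after two rotations. Neighbours `v j` with `j > i` are
handled by reversing the path.
-/

open SimpleGraph

/-- A graph `G` is `t`-tough if for every set `S` of vertices such that `G - S` is
disconnected, `t * c(G - S) ≤ |S|`, where `c` counts connected components. -/
def Tough {V : Type*} [Fintype V] (t : ℝ) (G : SimpleGraph V) : Prop :=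
  ∀ S : Finset V, ¬ (G.induce ((↑S : Set V)ᶜ)).Connected →
    t * (Nat.card (G.induce ((↑S : Set V)ᶜ)).ConnectedComponent) ≤ S.card

open Finset

namespace SimpleGraph

variable {V : Type*} {G : SimpleGraph V}

theorem exists_walk_support_eq_map_range' {v : ℕ → V} {a b : ℕ} (hab : a ≤ b)
    (hadj : ∀ i, a ≤ i → i < b → G.Adj (v i) (v (i + 1))) :
    ∃ p : G.Walk (v a) (v b), p.support = (List.range' a (b + 1 - a)).map v := by
  induction b, hab using Nat.le_induction with
  | base => exact ⟨.nil, by simp⟩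
  | succ b hab ih =>
    obtain ⟨p, hp⟩ := ih fun i h1 h2 => hadj i h1 (by omega)
    refine ⟨p.concat (hadj b hab (by omega)), ?_⟩
    rw [Walk.support_concat, hp, show b + 1 + 1 - a = b + 1 - a + 1 by omega,
      List.range'_concat, List.map_append, List.map_singleton]
    congr 3
    omega

/-- A Hamiltonian path indexed from `1` to `n`; the values of `v` outside `[1, n]` play no role. -/
structure IsHamiltonianPathSeq (G : SimpleGraph V) (n : ℕ) (v : ℕ → V) : Prop where
  injOn : ∀ i j, 1 ≤ i → i ≤ n → 1 ≤ j → j ≤ n → v i = v j → i = j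
  surj : ∀ w, ∃ i, 1 ≤ i ∧ i ≤ n ∧ v i = w
  adj : ∀ i, 1 ≤ i → i < n → G.Adj (v i) (v (i + 1))

def reversePrefix (v : ℕ → V) (k : ℕ) (t : ℕ) : V :=
  if t ≤ k then v (k + 1 - t) else v t

theorem reversePrefix_of_le {v : ℕ → V} {k t : ℕ} (h : t ≤ k) :
    reversePrefix v k t = v (k + 1 - t) :=
  if_pos h

theorem reversePrefix_of_lt {v : ℕ → V} {k t : ℕ} (h : k < t) : reversePrefix v k t = v t :=
  if_neg (by omega)

theorem card_filter_adj_eq_degree [Fintype V] [DecidableRel G.Adj] {u : V} (f : ℕ → V)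
    (s : Finset ℕ) (hf : Set.InjOn f s) (hcover : ∀ w, G.Adj u w → ∃ k ∈ s, f k = w) :
    #{k ∈ s | G.Adj u (f k)} = G.degree u := by
  rw [← card_neighborFinset_eq_degree]
  refine card_nbij f (fun k hk => ?_) (hf.mono (filter_subset _ s)) fun w hw => ?_
  · simpa using (mem_filter.1 hk).2
  · obtain ⟨k, hk, rfl⟩ := hcover w (by simpa using hw)
    exact ⟨k, by simpa [hk] using hw, rfl⟩

def commonNonNeighbors (G : SimpleGraph V) (x y : V) : Set V :=
  {w | w ≠ x ∧ w ≠ y ∧ ¬ G.Adj w x ∧ ¬ G.Adj w y}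

theorem commonNonNeighbors_comm (x y : V) :
    G.commonNonNeighbors x y = G.commonNonNeighbors y x := by
  ext w
  simp only [commonNonNeighbors, Set.mem_ofPred_eq]
  tauto

namespace IsHamiltonianPathSeq

variable {n : ℕ} {v : ℕ → V}

theorem reverse (h : IsHamiltonianPathSeq G n v) :
    IsHamiltonianPathSeq G n (fun t => v (n + 1 - t)) where
  injOn i j hi hin hj hjn hij := by
    have := h.injOn _ _ (by omega) (by omega) (by omega) (by omega) hij
    omega
  surj w := by
    obtain ⟨i, hi, hin, rfl⟩ := h.surj w
    exact ⟨n + 1 - i, by omega, by omega, by congr 1; omega⟩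
  adj i hi hin := by
    have := h.adj (n - i) (by omega) (by omega)
    rw [show n - i + 1 = n + 1 - i by omega, show n - i = n + 1 - (i + 1) by omega] at this
    exact this.symm

/-- Pósa rotation. -/
theorem reversePrefix (h : IsHamiltonianPathSeq G n v) {k : ℕ} (hk : 1 ≤ k) (hkn : k < n)
    (hadj : G.Adj (v 1) (v (k + 1))) : IsHamiltonianPathSeq G n (reversePrefix v k) where
  injOn i j hi hin hj hjn hij := by
    unfold SimpleGraph.reversePrefix at hij
    split_ifs at hij <;>
      (have := h.injOn _ _ (by omega) (by omega) (by omega) (by omega) hij; omega)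
  surj w := by
    obtain ⟨i, hi, hin, rfl⟩ := h.surj w
    by_cases hik : i ≤ k
    · exact ⟨k + 1 - i, by omega, by omega, by rw [reversePrefix_of_le (by omega)]; congr 1; omega⟩
    · exact ⟨i, hi, hin, reversePrefix_of_lt (by omega)⟩
  adj t ht htn := by
    rcases lt_trichotomy t k with htk | rfl | htk
    · rw [reversePrefix_of_le htk.le, reversePrefix_of_le htk]
      have := h.adj (k - t) (by omega) (by omega)
      rw [show k - t + 1 = k + 1 - t by omega, show k - t = k + 1 - (t + 1) by omega] at this
      exact this.symm
    · rwa [reversePrefix_of_le le_rfl, reversePrefix_of_lt (Nat.lt_succ_self t),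
        Nat.add_sub_cancel_left]
    · rw [reversePrefix_of_lt htk, reversePrefix_of_lt (by omega)]
      exact h.adj t ht htn

theorem isHamiltonian_of_adj [Fintype V] [DecidableEq V] (h : IsHamiltonianPathSeq G n v)
    (hn : 3 ≤ n) (hadj : G.Adj (v n) (v 1)) : G.IsHamiltonian := by
  obtain ⟨p, hp⟩ := exists_walk_support_eq_map_range' (G := G) (by omega : 1 ≤ n)
    fun i hi hin => h.adj i hi hin
  rw [Nat.add_sub_cancel] at hp
  have hnodup : p.support.Nodup := by
    rw [hp]
    refine List.Nodup.map_on (fun i hi j hj hij => ?_) List.nodup_range'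
    rw [List.mem_range'_1] at hi hj
    exact h.injOn i j (by omega) (by omega) (by omega) (by omega) hij
  have hmem : ∀ w, w ∈ p.support := fun w => by
    obtain ⟨i, hi, hin, rfl⟩ := h.surj w
    rw [hp]
    exact List.mem_map_of_mem (List.mem_range'_1.2 ⟨hi, by omega⟩)
  have hpath : p.IsPath := Walk.IsPath.mk' hnodup
  have hlen : p.length = n - 1 := by
    have := p.length_support
    rw [hp, List.length_map, List.length_range'] at this
    omega
  have hcycle : (Walk.cons hadj p).IsCycle := by
    refine (Walk.cons_isCycle_iff p hadj).2 ⟨hpath, fun he => ?_⟩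
    have := hpath.length_eq_one_of_mem_edges (Sym2.eq_swap ▸ he)
    omega
  refine fun _ => ⟨v n, Walk.cons hadj p, ?_⟩
  rw [Walk.isHamiltonianCycle_iff_isCycle_and_support_count_tail_eq_one]
  exact ⟨hcycle, fun w => List.count_eq_one_of_mem hnodup (hmem w)⟩

theorem not_adj_last_of_adj_first_succ [Fintype V] [DecidableEq V]
    (h : IsHamiltonianPathSeq G n v) (hn : 3 ≤ n) (hham : ¬ G.IsHamiltonian) {k : ℕ}
    (hk : 1 ≤ k) (hkn : k < n) (hx : G.Adj (v 1) (v (k + 1))) : ¬ G.Adj (v n) (v k) :=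
  fun hy => hham <| (h.reversePrefix hk hkn hx).isHamiltonian_of_adj hn <| by
    rwa [reversePrefix_of_lt hkn, reversePrefix_of_le hk, Nat.add_sub_cancel]

theorem degree_first [Fintype V] [DecidableRel G.Adj] (h : IsHamiltonianPathSeq G n v) :
    G.degree (v 1) = #{k ∈ Icc 1 (n - 1) | G.Adj (v 1) (v (k + 1))} := by
  refine (card_filter_adj_eq_degree _ _ (fun i hi j hj hij => ?_) fun w hw => ?_).symm
  · simp only [coe_Icc, Set.mem_Icc] at hi hj
    have := h.injOn _ _ (by omega) (by omega) (by omega) (by omega) hij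
    omega
  · obtain ⟨j, hj, hjn, rfl⟩ := h.surj w
    have hj1 : j ≠ 1 := by rintro rfl; exact G.irrefl hw
    exact ⟨j - 1, by simp only [mem_Icc]; omega, by congr 1; omega⟩

theorem degree_last [Fintype V] [DecidableRel G.Adj] (h : IsHamiltonianPathSeq G n v) :
    G.degree (v n) = #{k ∈ Icc 1 (n - 1) | G.Adj (v n) (v k)} := by
  refine (card_filter_adj_eq_degree _ _ (fun i hi j hj hij => ?_) fun w hw => ?_).symm
  · simp only [coe_Icc, Set.mem_Icc] at hi hj
    exact h.injOn _ _ (by omega) (by omega) (by omega) (by omega) hij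
  · obtain ⟨j, hj, hjn, rfl⟩ := h.surj w
    have hjn' : j ≠ n := by rintro rfl; exact G.irrefl hw
    exact ⟨j, by simp only [mem_Icc]; omega, rfl⟩

theorem adj_first_succ_or_adj_last [Fintype V] [DecidableEq V] [DecidableRel G.Adj]
    (h : IsHamiltonianPathSeq G n v) (hn : 3 ≤ n) (hham : ¬ G.IsHamiltonian)
    (hdeg : G.degree (v 1) + G.degree (v n) = n - 1) {k : ℕ} (hk : 1 ≤ k) (hkn : k < n) :
    G.Adj (v 1) (v (k + 1)) ∨ G.Adj (v k) (v n) := by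
  have hdisj : Disjoint {k ∈ Icc 1 (n - 1) | G.Adj (v 1) (v (k + 1))}
      {k ∈ Icc 1 (n - 1) | G.Adj (v n) (v k)} :=
    disjoint_filter.2 fun k hk => by
      simp only [mem_Icc] at hk
      exact h.not_adj_last_of_adj_first_succ hn hham hk.1 (by omega)
  have hall : #{k ∈ Icc 1 (n - 1) | G.Adj (v 1) (v (k + 1)) ∨ G.Adj (v n) (v k)} =
      #(Icc 1 (n - 1)) := by
    rw [filter_or, card_union_of_disjoint hdisj, ← h.degree_first, ← h.degree_last, hdeg,
      Nat.card_Icc]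
    omega
  exact (filter_card_eq hall k (by simp only [mem_Icc]; omega)).imp_right G.adj_symm

theorem succ_mem_commonNonNeighbors [Fintype V] [DecidableEq V] [DecidableRel G.Adj]
    (h : IsHamiltonianPathSeq G n v) (hn : 3 ≤ n) (hham : ¬ G.IsHamiltonian)
    (hdeg : G.degree (v 1) + G.degree (v n) = n - 1) {i j : ℕ} (hin : i ≤ n)
    (hi : v i ∈ G.commonNonNeighbors (v 1) (v n)) (hj : 1 ≤ j) (hji : j < i)
    (hadj : G.Adj (v i) (v j)) : v (j + 1) ∈ G.commonNonNeighbors (v 1) (v n) := by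
  obtain ⟨hix1, hiyn, hix, hiy⟩ := hi
  replace hin : i < n := hin.lt_of_ne fun e => hiyn (e ▸ rfl)
  obtain rfl | hji := (show j + 1 = i ∨ j + 1 < i by omega)
  · exact ⟨hix1, hiyn, hix, hiy⟩
  have hx : G.Adj (v 1) (v (i + 1)) :=
    (h.adj_first_succ_or_adj_last hn hham hdeg (by omega) hin).resolve_right hiy
  have hy : G.Adj (v (i - 1)) (v n) :=
    (h.adj_first_succ_or_adj_last hn hham hdeg (k := i - 1) (by omega) (by omega)).resolve_left
      (by rw [Nat.sub_add_cancel (by omega)]; exact fun e => hix e.symm)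
  refine ⟨fun e => ?_, fun e => ?_, fun hxj => hham ?_, fun hyj => hham ?_⟩
  · have := h.injOn _ _ (by omega) (by omega) (by omega) (by omega) e
    omega
  · have := h.injOn _ _ (by omega) (by omega) (by omega) (by omega) e
    omega
  · -- the cycle `v j … v 1 v (j + 1) … v (i - 1) v n … v i v j`
    refine ((h.reversePrefix hj (by omega) hxj.symm).reversePrefix (k := i - 1) (by omega)
      (by omega) ?_).isHamiltonian_of_adj hn ?_
    · rw [reversePrefix_of_le hj, reversePrefix_of_lt (by omega), Nat.add_sub_cancel,
        Nat.sub_add_cancel (by omega)]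
      exact hadj.symm
    · rw [reversePrefix_of_lt (by omega : i - 1 < n), reversePrefix_of_lt (by omega : j < n),
        reversePrefix_of_le (by omega : 1 ≤ i - 1), Nat.add_sub_cancel,
        reversePrefix_of_lt (by omega : j < i - 1)]
      exact hy.symm
  · -- the cycle `v (j + 1) … v i v j … v 1 v (i + 1) … v n v (j + 1)`
    refine ((h.reversePrefix (by omega) hin hx).reversePrefix (k := i - j) (by omega)
      (by omega) ?_).isHamiltonian_of_adj hn ?_
    · rw [reversePrefix_of_le (by omega), reversePrefix_of_le (by omega), Nat.add_sub_cancel,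
        show i + 1 - (i - j + 1) = j by omega]
      exact hadj
    · rw [reversePrefix_of_lt (by omega : i - j < n), reversePrefix_of_lt hin,
        reversePrefix_of_le (by omega : 1 ≤ i - j), Nat.add_sub_cancel,
        reversePrefix_of_le (by omega : i - j ≤ i), show i + 1 - (i - j) = j + 1 by omega]
      exact hyj.symm

theorem pred_mem_commonNonNeighbors [Fintype V] [DecidableEq V] [DecidableRel G.Adj]
    (h : IsHamiltonianPathSeq G n v) (hn : 3 ≤ n) (hham : ¬ G.IsHamiltonian)
    (hdeg : G.degree (v 1) + G.degree (v n) = n - 1) {i j : ℕ} (hi : 1 ≤ i)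
    (hiS : v i ∈ G.commonNonNeighbors (v 1) (v n)) (hjn : j ≤ n) (hij : i < j)
    (hadj : G.Adj (v i) (v j)) : v (j - 1) ∈ G.commonNonNeighbors (v 1) (v n) := by
  have hv : ∀ t, t ≤ n → v (n + 1 - (n + 1 - t)) = v t := fun t ht => by congr 1; omega
  have h1 : v (n + 1 - 1) = v n := by rw [Nat.add_sub_cancel]
  have hn1 : v (n + 1 - n) = v 1 := by rw [Nat.add_sub_cancel_left]
  have key := h.reverse.succ_mem_commonNonNeighbors hn hham (i := n + 1 - i) (j := n + 1 - j)
    (by rwa [h1, hn1, add_comm]) (by omega)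
    (by rwa [h1, hn1, hv i (by omega), commonNonNeighbors_comm]) (by omega) (by omega)
    (by rwa [hv i (by omega), hv j hjn])
  rwa [h1, hn1, commonNonNeighbors_comm, show n + 1 - (n + 1 - j + 1) = j - 1 by omega] at key

end IsHamiltonianPathSeq

end SimpleGraph

theorem stmt_13_general {V : Type*} [Fintype V] [DecidableEq V] {n : ℕ} (hn : 3 ≤ n)
    (G : SimpleGraph V) [DecidableRel G.Adj]
    (hham : ¬ G.IsHamiltonian)
    (v : ℕ → V)
    (hinj : ∀ i j, 1 ≤ i → i ≤ n → 1 ≤ j → j ≤ n → v i = v j → i = j)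
    (hsurj : ∀ w : V, ∃ i, 1 ≤ i ∧ i ≤ n ∧ v i = w)
    (hpath : ∀ i, 1 ≤ i → i < n → G.Adj (v i) (v (i + 1)))
    (hdeg : G.degree (v 1) + G.degree (v n) = n - 1)
    (S : Set V)
    (hS : S = {w | w ≠ v 1 ∧ w ≠ v n ∧ ¬ G.Adj w (v 1) ∧ ¬ G.Adj w (v n)}) :
    ∀ i, 1 ≤ i → i ≤ n → v i ∈ S → ∀ w, G.Adj (v i) w →
      ∃ j, 1 ≤ j ∧ j ≤ n ∧ w = v j ∧
        ((j < i ∧ v (j + 1) ∈ S) ∨ (i < j ∧ v (j - 1) ∈ S)) := by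
  change S = G.commonNonNeighbors (v 1) (v n) at hS
  subst hS
  have h : G.IsHamiltonianPathSeq n v := ⟨hinj, hsurj, hpath⟩
  intro i hi hin hiS w hw
  obtain ⟨j, hj, hjn, rfl⟩ := hsurj w
  refine ⟨j, hj, hjn, rfl, ?_⟩
  rcases lt_trichotomy j i with hji | rfl | hij
  · exact .inl ⟨hji, h.succ_mem_commonNonNeighbors hn hham hdeg hin hiS hj hji hw⟩
  · exact (G.irrefl hw).elim
  · exact .inr ⟨hij, h.pred_mem_commonNonNeighbors hn hham hdeg hi hiS hjn hij hw⟩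

/-- Let `G` be a 2-tough non-Hamiltonian graph on `n ≥ 3` vertices possessing a
Hamiltonian path `v_1, v_2, …, v_n` with `x = v_1` and `y = v_n` non-adjacent and
`d(x) + d(y) = n - 1`. Let `S` be the set of vertices (other than `x` and `y`)
adjacent to neither `x` nor `y`. Then for every `v_i ∈ S`, every neighbor of `v_i` is
of the form `v_j` with either `j < i` and `v_{j+1} ∈ S`, or `j > i` and
`v_{j-1} ∈ S`. -/
theorem stmt_13 {V : Type*} [Fintype V] [DecidableEq V] {n : ℕ} (hn : 3 ≤ n)
    (G : SimpleGraph V) [DecidableRel G.Adj]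
    (htough : Tough 2 G) (hham : ¬ G.IsHamiltonian)
    (v : ℕ → V)
    (hinj : ∀ i j, 1 ≤ i → i ≤ n → 1 ≤ j → j ≤ n → v i = v j → i = j)
    (hsurj : ∀ w : V, ∃ i, 1 ≤ i ∧ i ≤ n ∧ v i = w)
    (hpath : ∀ i, 1 ≤ i → i < n → G.Adj (v i) (v (i + 1)))
    (hnadj : ¬ G.Adj (v 1) (v n))
    (hdeg : G.degree (v 1) + G.degree (v n) = n - 1)
    (S : Set V)
    (hS : S = {w | w ≠ v 1 ∧ w ≠ v n ∧ ¬ G.Adj w (v 1) ∧ ¬ G.Adj w (v n)}) :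
    ∀ i, 1 ≤ i → i ≤ n → v i ∈ S → ∀ w, G.Adj (v i) w →
      ∃ j, 1 ≤ j ∧ j ≤ n ∧ w = v j ∧
        ((j < i ∧ v (j + 1) ∈ S) ∨ (i < j ∧ v (j - 1) ∈ S)) :=
  stmt_13_general hn G hham v hinj hsurj hpath hdeg S hS
end

section
/- Let ε > 1/4 be a real number and let G be a (2+ε)-tough non-Hamiltonian graph on n ≥ 3 vertices possessing a Hamiltonian path from x to y, where x and y are non-adjacent vertices with d(x) + d(y) = n − 2. Let D = N(x) ∩ N(y) and let S be the set of vertices adjacent to neither x nor y. Then |S| = |D| and |D| ≥ 2. -/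
/-!
Write the Hamiltonian path as `x = v 0, v 1, …, v (n - 1) = y`. Since `N(x) ∪ N(y)` lies in
`V \ {x, y}`, inclusion–exclusion and `d(x) + d(y) = n - 2` give `|S| = |D|`.

For `|D| ≥ 2`, note that each of the configurations `y ~ v i, x ~ v (i + 1)` and
"chord `v i v k` plus neighbours of `x` and `y` next to its ends" becomes a Hamiltonian cycle
after one or two Pósa rotations, so none of them occurs. Hence the indices `i` with `y ~ v i`
and those with `x ~ v (i + 1)` are disjoint, and the degree condition leaves exactly one index
(the slack) that is in neither set. If `|D| ≤ 1`, these constraints force the neighbours of `x`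
and `y` into consecutive runs along the path. Then two vertices separate `G`: either they cut
an initial segment of the path off from the rest, or they are the two path neighbours of the
unique vertex of `S`, and that vertex has no other neighbours. So `G` is not `t`-tough for
any `t > 1`. Reversing the path swaps `x` and `y`, so we may assume the vertex of `D` comes
before the vertex of `S`.
-/

open SimpleGraph

open Finset

section

variable {V : Type*} {G : SimpleGraph V}

theorem List.range'_eq_append {s m n : ℕ} (h : m ≤ n) :
    List.range' s n = List.range' s m ++ List.range' (s + m) (n - m) := by
  rw [List.range'_append_1, Nat.add_sub_cancel' h]

theorem List.head?_map_range' (v : ℕ → V) {s m : ℕ} (h : 0 < m) :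
    ((List.range' s m).map v).head? = some (v s) := by
  simp [List.head?_range', h.ne']

theorem List.getLast?_map_range' (v : ℕ → V) {s m : ℕ} (h : 0 < m) :
    ((List.range' s m).map v).getLast? = some (v (s + m - 1)) := by
  simp [List.getLast?_range', h.ne']

theorem Tough.two_mul_le_card_of_separates [Fintype V] {t : ℝ} (h : Tough t G) {T : Finset V}
    {Q : V → Prop} {a b : V} (ha : a ∉ T) (hb : b ∉ T) (hQa : Q a) (hQb : ¬ Q b)
    (hQ : ∀ u w, u ∉ T → w ∉ T → G.Adj u w → Q u → Q w) : 2 * t ≤ #T := by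
  set H := G.induce ((↑T : Set V)ᶜ)
  have hreach : ∀ c e : ((↑T : Set V)ᶜ : Set V), H.Reachable c e → Q c → Q e := by
    rintro c e ⟨p⟩
    induction p with
    | nil => exact id
    | @cons u w _ hadj _ ih => exact fun hu => ih (hQ u w u.2 w.2 hadj hu)
  let a' : ((↑T : Set V)ᶜ : Set V) := ⟨a, by simpa using ha⟩
  let b' : ((↑T : Set V)ᶜ : Set V) := ⟨b, by simpa using hb⟩
  have hab : ¬ H.Reachable a' b' := fun hr => hQb (hreach _ _ hr hQa)
  have hcard : 2 ≤ Nat.card H.ConnectedComponent := by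
    have : Nontrivial H.ConnectedComponent :=
      ⟨_, _, fun h => hab (ConnectedComponent.eq.mp h)⟩
    exact Finite.one_lt_card_iff_nontrivial.mpr this
  have hle := h T fun hc => hab (hc.preconnected a' b')
  rcases le_or_gt t 0 with ht | ht
  · have : (0 : ℝ) ≤ #T := Nat.cast_nonneg _
    linarith
  · calc 2 * t ≤ t * Nat.card H.ConnectedComponent := by
          rw [mul_comm]; exact mul_le_mul_of_nonneg_left (by exact_mod_cast hcard) ht.le
      _ ≤ #T := hle

theorem Tough.two_mul_le_card_of_neighborSet_subset [Fintype V] {t : ℝ} (h : Tough t G)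
    {T : Finset V} {u b : V} (hu : u ∉ T) (hb : b ∉ T) (hbu : b ≠ u)
    (hN : G.neighborSet u ⊆ T) : 2 * t ≤ #T :=
  h.two_mul_le_card_of_separates (Q := (· = u)) hu hb rfl hbu fun _ w _ hw hadj hu' =>
    (hw (hN (hu' ▸ hadj : G.Adj u w))).elim

theorem ncard_nonadj_add_degree_add_degree [Fintype V] [DecidableRel G.Adj] {x y : V}
    (hxy : x ≠ y) (hnadj : ¬ G.Adj x y) :
    {w | w ≠ x ∧ w ≠ y ∧ ¬ G.Adj w x ∧ ¬ G.Adj w y}.ncard + G.degree x + G.degree y =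
      (G.neighborSet x ∩ G.neighborSet y).ncard + (Fintype.card V - 2) := by
  classical
  set N := G.neighborFinset x ∪ G.neighborFinset y
  have hS : {w | w ≠ x ∧ w ≠ y ∧ ¬ G.Adj w x ∧ ¬ G.Adj w y} = ↑((univ \ {x, y}) \ N) := by
    ext w
    simp only [N, Set.mem_ofPred_eq, coe_sdiff, coe_univ, coe_insert, coe_singleton, Set.mem_sdiff,
      Set.mem_univ, Set.mem_insert_iff, Set.mem_singleton_iff, coe_union, Set.mem_union,
      mem_coe, mem_neighborFinset, G.adj_comm w]
    tauto
  have hD : G.neighborSet x ∩ G.neighborSet y = ↑(G.neighborFinset x ∩ G.neighborFinset y) := by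
    simp
  have hsub : N ⊆ univ \ {x, y} := by
    intro w hw
    simp only [N, mem_union, mem_neighborFinset] at hw
    simp only [mem_sdiff, mem_univ, mem_insert, mem_singleton, true_and]
    rintro (rfl | rfl) <;> rcases hw with hw | hw
    exacts [G.irrefl hw, hnadj hw.symm, hnadj hw, G.irrefl hw]
  have hpair : #(univ \ {x, y}) = Fintype.card V - 2 := by
    rw [card_sdiff_of_subset (subset_univ _), card_univ, card_pair hxy]
  rw [hS, hD, Set.ncard_coe_finset, Set.ncard_coe_finset, card_sdiff_of_subset hsub, hpair,
    ← card_neighborFinset_eq_degree, ← card_neighborFinset_eq_degree]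
  have h1 := card_le_card hsub
  rw [hpair] at h1
  have h2 : #N + _ = _ := card_union_add_card_inter (G.neighborFinset x) (G.neighborFinset y)
  omega

namespace SimpleGraph

theorem Walk.IsHamiltonian.isHamiltonianCycle_cons [DecidableEq V] {a b : V} {p : G.Walk a b}
    (hp : p.IsHamiltonian) (h : G.Adj b a) (hlen : 2 ≤ p.length) :
    (Walk.cons h p).IsHamiltonianCycle := by
  refine isHamiltonianCycle_isCycle_and_isHamiltonian_tail.mpr
    ⟨Walk.isCycle_iff_isPath_tail_and_le_length.mpr ⟨?_, ?_⟩, ?_⟩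
  · simpa [Walk.tail_cons] using hp.isPath
  · simp only [Walk.length_cons]; omega
  · simpa [Walk.tail_cons, Walk.IsHamiltonian] using hp

structure IsHamiltonianList (G : SimpleGraph V) (L : List V) : Prop where
  nodup : L.Nodup
  mem : ∀ u, u ∈ L
  isChain : L.IsChain G.Adj

namespace IsHamiltonianList

variable {L L' l₁ l₂ l₃ : List V} {a b u w w₁ w₂ z : V}

theorem of_perm (h : IsHamiltonianList G L) (hp : L.Perm L') (hc : L'.IsChain G.Adj) :
    IsHamiltonianList G L' :=
  ⟨hp.nodup_iff.mp h.nodup, fun u => hp.subset (h.mem u), hc⟩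

theorem reverse (h : IsHamiltonianList G L) : IsHamiltonianList G L.reverse :=
  h.of_perm L.reverse_perm.symm (List.isChain_reverse.mpr (h.isChain.imp fun _ _ h => h.symm))

-- Pósa rotation about the first vertex.
theorem reverse_append (h : IsHamiltonianList G (l₁ ++ l₂)) (ha : l₁.head? = some a)
    (hb : l₂.head? = some b) (hab : G.Adj a b) : IsHamiltonianList G (l₁.reverse ++ l₂) := by
  obtain ⟨hc₁, hc₂, -⟩ := List.isChain_append.mp h.isChain
  refine h.of_perm (l₁.reverse_perm.symm.append_right l₂) (List.isChain_append.mpr ⟨?_, hc₂, ?_⟩)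
  · exact List.isChain_reverse.mpr (hc₁.imp fun _ _ h => h.symm)
  · simp [List.getLast?_reverse, ha, hb, hab]

variable [DecidableEq V] [Fintype V]

theorem isHamiltonian (h : IsHamiltonianList G L) (hlen : 3 ≤ L.length)
    (ha : L.head? = some a) (hb : L.getLast? = some b) (hba : G.Adj b a) : G.IsHamiltonian := by
  have hne : L ≠ [] := List.ne_nil_of_length_pos (by omega)
  obtain rfl : L.head hne = a := by simpa [List.head?_eq_some_head hne] using ha
  obtain rfl : L.getLast hne = b := by simpa [List.getLast?_eq_some_getLast hne] using hb
  have hq : (Walk.ofSupport L hne h.isChain).IsHamiltonian := fun u => by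
    simpa using List.count_eq_one_of_mem h.nodup (h.mem u)
  exact fun _ => ⟨_, _, hq.isHamiltonianCycle_cons hba (by simp; omega)⟩

theorem isHamiltonian_of_crossing (h : IsHamiltonianList G (l₁ ++ l₂))
    (hlen : 3 ≤ (l₁ ++ l₂).length) (ha : l₁.head? = some a) (hu : l₁.getLast? = some u)
    (hw : l₂.head? = some w) (hb : l₂.getLast? = some b) (haw : G.Adj a w) (hub : G.Adj u b) :
    G.IsHamiltonian :=
  (h.reverse_append ha hw haw).isHamiltonian (by simpa using hlen)
    (by simp [List.head?_reverse, hu]) (by simp [List.getLast?_append, hb]) hub.symm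

theorem isHamiltonian_of_chord_succ_pred (h : IsHamiltonianList G (l₁ ++ l₂ ++ l₃))
    (hlen : 3 ≤ (l₁ ++ l₂ ++ l₃).length)
    (ha : l₁.head? = some a) (hu : l₁.getLast? = some u) (hw₁ : l₂.head? = some w₁)
    (hw₂ : l₂.getLast? = some w₂) (hz : l₃.head? = some z) (hb : l₃.getLast? = some b)
    (huz : G.Adj u z) (haw : G.Adj a w₁) (hbw : G.Adj b w₂) : G.IsHamiltonian := by
  rw [List.append_assoc] at h
  have h' := h.reverse_append ha (by simp [List.head?_append, hw₁]) haw
  rw [← List.append_assoc] at h'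
  exact h'.isHamiltonian_of_crossing (by simpa using hlen)
    (by simp [List.head?_append, List.head?_reverse, hu]) (by simp [List.getLast?_append, hw₂])
    hz hb huz hbw.symm

theorem isHamiltonian_of_chord_succ_succ (h : IsHamiltonianList G (l₁ ++ l₂ ++ l₃))
    (hlen : 3 ≤ (l₁ ++ l₂ ++ l₃).length)
    (ha : l₁.head? = some a) (hu : l₁.getLast? = some u) (hw₁ : l₂.head? = some w₁)
    (hw₂ : l₂.getLast? = some w₂) (hz : l₃.head? = some z) (hb : l₃.getLast? = some b)
    (huw : G.Adj u w₂) (hbw : G.Adj b w₁) (haz : G.Adj a z) : G.IsHamiltonian := by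
  have h' := h.reverse_append (by simp [List.head?_append, ha]) hz haz
  rw [List.reverse_append, List.append_assoc] at h'
  exact h'.isHamiltonian_of_crossing (by simp at hlen ⊢; omega) (by simp [List.head?_reverse, hw₂])
    (by simp [List.getLast?_reverse, hw₁]) (by simp [List.head?_append, List.head?_reverse, hu])
    (by simp [List.getLast?_append, hb]) huw.symm hbw.symm

theorem isHamiltonian_of_chord_pred_pred (h : IsHamiltonianList G (l₁ ++ l₂ ++ l₃))
    (hlen : 3 ≤ (l₁ ++ l₂ ++ l₃).length)
    (ha : l₁.head? = some a) (hu : l₁.getLast? = some u) (hw₁ : l₂.head? = some w₁)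
    (hw₂ : l₂.getLast? = some w₂) (hz : l₃.head? = some z) (hb : l₃.getLast? = some b)
    (hwz : G.Adj w₁ z) (hbu : G.Adj b u) (haw : G.Adj a w₂) : G.IsHamiltonian := by
  have h' := h.reverse
  rw [List.reverse_append, List.reverse_append, ← List.append_assoc] at h'
  have h'' := h'.reverse_append (by simp [List.head?_append, List.head?_reverse, hb])
    (by simp [List.head?_reverse, hu]) hbu
  rw [List.reverse_append, List.reverse_reverse, List.reverse_reverse, List.append_assoc] at h''
  exact h''.isHamiltonian_of_crossing (by simp at hlen ⊢; omega) hw₁ hw₂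
    (by simp [List.head?_append, hz]) (by simp [List.getLast?_append, List.getLast?_reverse, ha])
    hwz haw.symm

end IsHamiltonianList

structure IsHamiltonianSeq (G : SimpleGraph V) (n : ℕ) (v : ℕ → V) : Prop where
  injOn : Set.InjOn v (Set.Iio n)
  surj : ∀ u, ∃ i < n, v i = u
  adj : ∀ i, i + 1 < n → G.Adj (v i) (v (i + 1))

theorem Walk.IsHamiltonian.isHamiltonianSeq [DecidableEq V] [Fintype V] {x y : V}
    {p : G.Walk x y} (hp : p.IsHamiltonian) : IsHamiltonianSeq G (Fintype.card V) p.getVert where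
  injOn i hi j hj h := hp.isPath.getVert_injOn (by simp at hi ⊢; rw [hp.length_eq]; omega)
    (by simp at hj ⊢; rw [hp.length_eq]; omega) h
  surj u := by
    obtain ⟨i, hi, hle⟩ := Walk.mem_support_iff_exists_getVert.mp (hp.mem_support u)
    have := Fintype.card_pos_iff.mpr ⟨x⟩
    exact ⟨i, by rw [hp.length_eq] at hle; omega, hi⟩
  adj i hi := p.adj_getVert_succ (by rw [hp.length_eq]; omega)

namespace IsHamiltonianSeq

variable {n i j k : ℕ} {v : ℕ → V}

theorem apply_ne_apply (hv : IsHamiltonianSeq G n v) (hi : i < n) (hj : j < n) (hij : i ≠ j) :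
    v i ≠ v j :=
  fun h => hij (hv.injOn hi hj h)

theorem apply_notMem_pair [DecidableEq V] (hv : IsHamiltonianSeq G n v) (hi : i < n)
    (hj : j < n) (hk : k < n) (hij : i ≠ j) (hik : i ≠ k) : v i ∉ ({v j, v k} : Finset V) := by
  simp [hv.apply_ne_apply hi hj hij, hv.apply_ne_apply hi hk hik]

theorem isHamiltonianList (hv : IsHamiltonianSeq G n v) :
    IsHamiltonianList G ((List.range' 0 n).map v) where
  nodup := (List.nodup_range').map_on fun i hi j hj h =>
    hv.injOn (by simp at hi; simp; omega) (by simp at hj; simp; omega) h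
  mem u := by
    obtain ⟨i, hi, rfl⟩ := hv.surj u
    exact List.mem_map_of_mem (List.mem_range'_1.mpr ⟨by omega, by omega⟩)
  isChain := by
    refine List.isChain_iff_getElem.mpr fun i hi => ?_
    simp only [List.length_map, List.length_range'] at hi
    simpa using hv.adj i (by omega)

theorem reverse (hv : IsHamiltonianSeq G n v) :
    IsHamiltonianSeq G n (fun i => v (n - 1 - i)) where
  injOn i hi j hj h := by
    simp only [Set.mem_Iio] at hi hj
    have := hv.injOn (by simp; omega : n - 1 - i ∈ Set.Iio n) (by simp; omega) h
    omega
  surj u := by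
    obtain ⟨i, hi, rfl⟩ := hv.surj u
    exact ⟨n - 1 - i, by omega, by congr 1; omega⟩
  adj i hi := by
    have := hv.adj (n - 1 - (i + 1)) (by omega)
    rw [show n - 1 - (i + 1) + 1 = n - 1 - i by omega] at this
    exact this.symm

theorem degree_eq_card_filter [Fintype V] [DecidableRel G.Adj] (hv : IsHamiltonianSeq G n v)
    (u : V) :
    G.degree u = #{i ∈ range n | G.Adj u (v i)} := by
  rw [← card_neighborFinset_eq_degree]
  refine (card_bij (fun i _ => v i) (fun i hi => by simpa using (mem_filter.mp hi).2)
    (fun i hi j hj h => hv.injOn ?_ ?_ h) fun w hw => ?_).symm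
  · simpa using (mem_filter.mp hi).1
  · simpa using (mem_filter.mp hj).1
  · obtain ⟨i, hi, rfl⟩ := hv.surj w
    exact ⟨i, by simpa [hi] using hw, rfl⟩

theorem adj_first_of_le {a b : ℕ}
    (hcov : ∀ i, a ≤ i → i < b → G.Adj (v (n - 1)) (v i) ∨ G.Adj (v 0) (v (i + 1)))
    (hD : ∀ i, a ≤ i → i < b → G.Adj (v 0) (v i) → ¬ G.Adj (v (n - 1)) (v i))
    (ha : G.Adj (v 0) (v a)) : ∀ i, a ≤ i → i ≤ b → G.Adj (v 0) (v i) := by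
  intro i hai
  induction i, hai using Nat.le_induction with
  | base => exact fun _ => ha
  | succ i hai ih =>
    intro hib
    exact (hcov i hai (by omega)).resolve_left (hD i hai (by omega) (ih (by omega)))

variable [DecidableEq V] [Fintype V]

theorem isHamiltonian_of_adj_last_of_adj_first_succ (hv : IsHamiltonianSeq G n v) (hn : 3 ≤ n)
    (hi : i + 1 < n) (hy : G.Adj (v (n - 1)) (v i)) (hx : G.Adj (v 0) (v (i + 1))) :
    G.IsHamiltonian := by
  have hL := hv.isHamiltonianList
  rw [List.range'_eq_append (m := i + 1) (by omega), List.map_append, Nat.zero_add] at hL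
  refine hL.isHamiltonian_of_crossing (by simp; omega) (List.head?_map_range' v (by omega))
    ?_ (List.head?_map_range' v (by omega)) ?_ hx hy.symm
  · rw [List.getLast?_map_range' v (by omega)]; simp
  · rw [List.getLast?_map_range' v (by omega)]; congr 2; omega

theorem isHamiltonian_of_chord_succ_pred (hv : IsHamiltonianSeq G n v) (hn : 3 ≤ n)
    (hik : i + 2 ≤ k) (hk : k < n) (hc : G.Adj (v i) (v k))
    (hx : G.Adj (v 0) (v (i + 1))) (hy : G.Adj (v (n - 1)) (v (k - 1))) : G.IsHamiltonian := by
  have hL := hv.isHamiltonianList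
  rw [List.range'_eq_append (m := k) (by omega), List.range'_eq_append (m := i + 1) (by omega),
    List.map_append, List.map_append, Nat.zero_add, Nat.zero_add] at hL
  refine hL.isHamiltonian_of_chord_succ_pred (by simp; omega) (List.head?_map_range' v (by omega))
    (List.getLast?_map_range' v (by omega)) (List.head?_map_range' v (by omega))
    (List.getLast?_map_range' v (by omega)) (List.head?_map_range' v (by omega))
    (List.getLast?_map_range' v (by omega)) ?_ ?_ ?_
  · convert hc using 2; omega
  · exact hx
  · convert hy using 2 <;> omega

theorem isHamiltonian_of_chord_succ_succ (hv : IsHamiltonianSeq G n v) (hn : 3 ≤ n)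
    (hik : i < k) (hk : k + 1 < n) (hc : G.Adj (v i) (v k))
    (hy : G.Adj (v (n - 1)) (v (i + 1))) (hx : G.Adj (v 0) (v (k + 1))) : G.IsHamiltonian := by
  have hL := hv.isHamiltonianList
  rw [List.range'_eq_append (m := k + 1) (by omega), List.range'_eq_append (m := i + 1) (by omega),
    List.map_append, List.map_append, Nat.zero_add, Nat.zero_add] at hL
  refine hL.isHamiltonian_of_chord_succ_succ (by simp; omega) (List.head?_map_range' v (by omega))
    (List.getLast?_map_range' v (by omega)) (List.head?_map_range' v (by omega))
    (List.getLast?_map_range' v (by omega)) (List.head?_map_range' v (by omega))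
    (List.getLast?_map_range' v (by omega)) ?_ ?_ hx
  · convert hc using 2 <;> omega
  · convert hy using 2; omega

theorem isHamiltonian_of_chord_pred_pred (hv : IsHamiltonianSeq G n v) (hn : 3 ≤ n)
    (hi : 0 < i) (hik : i < k) (hk : k < n) (hc : G.Adj (v i) (v k))
    (hy : G.Adj (v (n - 1)) (v (i - 1))) (hx : G.Adj (v 0) (v (k - 1))) : G.IsHamiltonian := by
  have hL := hv.isHamiltonianList
  rw [List.range'_eq_append (m := k) (by omega), List.range'_eq_append (m := i) (by omega),
    List.map_append, List.map_append, Nat.zero_add, Nat.zero_add] at hL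
  refine hL.isHamiltonian_of_chord_pred_pred (by simp; omega) (List.head?_map_range' v (by omega))
    (List.getLast?_map_range' v (by omega)) (List.head?_map_range' v (by omega))
    (List.getLast?_map_range' v (by omega)) (List.head?_map_range' v (by omega))
    (List.getLast?_map_range' v (by omega)) hc ?_ ?_
  · convert hy using 2 <;> omega
  · convert hx using 2; omega

theorem exists_slack [DecidableRel G.Adj] (hv : IsHamiltonianSeq G n v) (hn : 3 ≤ n)
    (hG : ¬ G.IsHamiltonian) (hdeg : G.degree (v 0) + G.degree (v (n - 1)) = n - 2) :
    ∃ j, 0 < j ∧ j + 2 < n ∧ ¬ G.Adj (v (n - 1)) (v j) ∧ ¬ G.Adj (v 0) (v (j + 1)) ∧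
      ∀ i, i + 1 < n → i ≠ j → G.Adj (v (n - 1)) (v i) ∨ G.Adj (v 0) (v (i + 1)) := by
  obtain ⟨m, rfl⟩ : ∃ m, n = m + 1 := ⟨n - 1, by omega⟩
  simp only [Nat.add_one_sub_one, Nat.add_lt_add_iff_right] at hdeg ⊢
  have hA : #{i ∈ range m | G.Adj (v m) (v i)} = G.degree (v m) := by
    rw [hv.degree_eq_card_filter, range_add_one, filter_insert, if_neg (G.irrefl)]
  have hB : #{i ∈ range m | G.Adj (v 0) (v (i + 1))} = G.degree (v 0) := by
    rw [hv.degree_eq_card_filter, range_add_one', filter_insert, if_neg (G.irrefl), filter_map,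
      card_map]
    rfl
  have hAB : Disjoint {i ∈ range m | G.Adj (v m) (v i)} {i ∈ range m | G.Adj (v 0) (v (i + 1))} :=
    disjoint_filter.mpr fun i hi hy hx =>
      hG (hv.isHamiltonian_of_adj_last_of_adj_first_succ hn (by simpa using hi) hy hx)
  have hC : #{i ∈ range m | ¬ (G.Adj (v m) (v i) ∨ G.Adj (v 0) (v (i + 1)))} = 1 := by
    have := card_filter_add_card_filter_not (s := range m)
      (p := fun i => G.Adj (v m) (v i) ∨ G.Adj (v 0) (v (i + 1)))
    rw [filter_or, card_union_of_disjoint hAB, hA, hB, card_range] at this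
    omega
  obtain ⟨j, hj⟩ := card_eq_one.mp hC
  have hmem : ∀ i, i < m → ¬ (G.Adj (v m) (v i) ∨ G.Adj (v 0) (v (i + 1))) → i = j :=
    fun i hi h => mem_singleton.mp (hj ▸ mem_filter.mpr ⟨mem_range.mpr hi, h⟩)
  obtain ⟨hjm, hjy, hjx⟩ : j < m ∧ ¬ G.Adj (v m) (v j) ∧ ¬ G.Adj (v 0) (v (j + 1)) := by
    have hjmem : j ∈ {i ∈ range m | ¬ (G.Adj (v m) (v i) ∨ G.Adj (v 0) (v (i + 1)))} :=
      hj ▸ mem_singleton_self j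
    simpa using hjmem
  have hj₀ : 0 < j := Nat.pos_of_ne_zero (by rintro rfl; exact hjx (hv.adj 0 (by omega)))
  have hjm' : j + 1 < m := by
    by_contra h
    obtain rfl : j = m - 1 := by omega
    refine hjy ?_
    simpa [Nat.sub_add_cancel (by omega : 1 ≤ m)] using (hv.adj (m - 1) (by omega)).symm
  exact ⟨j, hj₀, by omega, hjy, hjx, fun i hi hij => by_contra fun h => hij (hmem i hi h)⟩

theorem adj_last_of_le (hv : IsHamiltonianSeq G n v) (hn : 3 ≤ n) (hG : ¬ G.IsHamiltonian)
    {a b : ℕ} (hb : b < n)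
    (hS : ∀ i, a < i → i ≤ b → ¬ G.Adj (v 0) (v i) → G.Adj (v (n - 1)) (v i))
    (ha : G.Adj (v (n - 1)) (v a)) : ∀ i, a ≤ i → i ≤ b → G.Adj (v (n - 1)) (v i) := by
  intro i hai
  induction i, hai using Nat.le_induction with
  | base => exact fun _ => ha
  | succ i hai ih =>
    intro hib
    exact hS (i + 1) (by omega) hib fun hx =>
      hG (hv.isHamiltonian_of_adj_last_of_adj_first_succ hn (by omega) (ih (by omega)) hx)

theorem tough_le_one_of_adj_first_le_of_adj_last_gt {t : ℝ} {m c : ℕ}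
    (hv : IsHamiltonianSeq G n v) (hn : 3 ≤ n) (hG : ¬ G.IsHamiltonian) (htough : Tough t G)
    (hm : 0 < m) (hmc : m < c) (hc : c + 1 < n)
    (hx : ∀ i, 0 < i → i ≤ m → G.Adj (v 0) (v i))
    (hy : ∀ k, m < k → k < n → k ≠ c → G.Adj (v (n - 1)) (v (k - 1))) : t ≤ 1 := by
  have hcut := htough.two_mul_le_card_of_separates (T := {v m, v c})
    (Q := fun u => ∃ i < m, v i = u)
    (hv.apply_notMem_pair (by omega) (by omega) (by omega) hm.ne (by omega))
    (hv.apply_notMem_pair (by omega) (by omega) (by omega) (by omega) (by omega))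
    ⟨0, hm, rfl⟩ ?_ ?_
  · have : (#{v m, v c} : ℝ) ≤ 2 := by exact_mod_cast card_le_two
    linarith
  · rintro ⟨i, hi, h⟩
    exact hv.apply_ne_apply (by omega) (by omega) (by omega) h
  rintro u w - hw huw ⟨i, hi, rfl⟩
  obtain ⟨k, hk, rfl⟩ := hv.surj w
  by_contra! hQ
  have hkm : k ≠ m := fun h => hw (by simp [h])
  have hmk : m < k := by
    have : ¬ k < m := fun h => hQ k h rfl
    omega
  exact hG (hv.isHamiltonian_of_chord_succ_pred hn (by omega) hk huw
    (hx (i + 1) (by omega) (by omega)) (hy k hmk hk fun h => hw (by simp [h])))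

theorem tough_le_one_of_neighborSet_subset {t : ℝ} {s : ℕ} (hv : IsHamiltonianSeq G n v)
    (htough : Tough t G) (hs : 1 < s) (hsn : s + 1 < n)
    (hN : G.neighborSet (v s) ⊆ ↑({v (s - 1), v (s + 1)} : Finset V)) : t ≤ 1 := by
  have hcut := htough.two_mul_le_card_of_neighborSet_subset
    (hv.apply_notMem_pair (by omega) (by omega) (by omega) (by omega) (by omega))
    (hv.apply_notMem_pair (i := 0) (by omega) (by omega) (by omega) (by omega) (by omega))
    (hv.apply_ne_apply (by omega) (by omega) (by omega)) hN
  have : (#{v (s - 1), v (s + 1)} : ℝ) ≤ 2 := by exact_mod_cast card_le_two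
  linarith

theorem neighborSet_subset_pred_succ (hv : IsHamiltonianSeq G n v) (hn : 3 ≤ n)
    (hG : ¬ G.IsHamiltonian) {d s j : ℕ} (hds : d < s) (hsj : s < j) (hjn : j < n)
    (hx₁ : ∀ i, 0 < i → i ≤ d → G.Adj (v 0) (v i))
    (hy₁ : ∀ i, d ≤ i → i < s → G.Adj (v (n - 1)) (v i))
    (hx₂ : ∀ i, s < i → i ≤ j → G.Adj (v 0) (v i))
    (hy₂ : ∀ i, j < i → i + 1 < n → G.Adj (v (n - 1)) (v i)) :
    G.neighborSet (v s) ⊆ ↑({v (s - 1), v (s + 1)} : Finset V) := by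
  intro w hadj
  obtain ⟨k, hk, rfl⟩ := hv.surj w
  by_contra h
  obtain ⟨hk₁, hk₂⟩ : k ≠ s - 1 ∧ k ≠ s + 1 := by constructor <;> rintro rfl <;> simp at h
  have hks : k ≠ s := by rintro rfl; exact G.irrefl hadj
  apply hG
  rcases lt_or_gt_of_ne hks with hks | hks
  · rcases lt_or_ge k d with hkd | hkd
    · exact hv.isHamiltonian_of_chord_succ_pred hn (by omega) (by omega) hadj.symm
        (hx₁ (k + 1) (by omega) (by omega)) (hy₁ (s - 1) (by omega) (by omega))
    · exact hv.isHamiltonian_of_chord_succ_succ hn hks (by omega) hadj.symm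
        (hy₁ (k + 1) (by omega) (by omega)) (hx₂ (s + 1) (by omega) (by omega))
  · rcases le_or_gt k (j + 1) with hkj | hkj
    · exact hv.isHamiltonian_of_chord_pred_pred hn (by omega) hks hk hadj
        (hy₁ (s - 1) (by omega) (by omega)) (hx₂ (k - 1) (by omega) (by omega))
    · exact hv.isHamiltonian_of_chord_succ_pred hn (by omega) hk hadj
        (hx₂ (s + 1) (by omega) (by omega)) (hy₂ (k - 1) (by omega) (by omega))

theorem tough_le_one_of_no_common_neighbor [DecidableRel G.Adj] {t : ℝ}
    (hv : IsHamiltonianSeq G n v) (hn : 3 ≤ n) (hG : ¬ G.IsHamiltonian) (htough : Tough t G)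
    (hdeg : G.degree (v 0) + G.degree (v (n - 1)) = n - 2)
    (hD : ∀ u, G.Adj (v 0) u → ¬ G.Adj (v (n - 1)) u)
    (hS : ∀ u, u ≠ v 0 → u ≠ v (n - 1) → ¬ G.Adj (v 0) u → G.Adj (v (n - 1)) u) : t ≤ 1 := by
  obtain ⟨j, hj₀, hjn, hjy, hjx, hcov⟩ := hv.exists_slack hn hG hdeg
  have hS' : ∀ i, 0 < i → i + 1 < n → ¬ G.Adj (v 0) (v i) → G.Adj (v (n - 1)) (v i) :=
    fun i h₀ hi => hS _ (hv.apply_ne_apply (by omega) (by omega) h₀.ne')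
      (hv.apply_ne_apply (by omega) (by omega) (by omega))
  have hX := adj_first_of_le (a := 1) (b := j) (fun i _ _ => hcov i (by omega) (by omega))
    (fun i _ _ => hD _) (hv.adj 0 (by omega))
  have hY := hv.adj_last_of_le hn hG (a := j + 1) (b := n - 2) (by omega)
    (fun i _ _ => hS' i (by omega) (by omega)) (hS' (j + 1) (by omega) (by omega) hjx)
  exact hv.tough_le_one_of_adj_first_le_of_adj_last_gt hn hG htough (m := j) (c := j + 1) hj₀
    (by omega) hjn (fun i h₁ h₂ => hX i h₁ h₂) fun k h₁ h₂ _ => hY (k - 1) (by omega) (by omega)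

theorem le_of_slack (hv : IsHamiltonianSeq G n v) (hn : 3 ≤ n) (hG : ¬ G.IsHamiltonian)
    {d s j : ℕ} (hds : d < s) (hsn : s < n) (hdx : G.Adj (v 0) (v d))
    (hjy : ¬ G.Adj (v (n - 1)) (v j)) (hjx : ¬ G.Adj (v 0) (v (j + 1)))
    (hS : ∀ i, 0 < i → i < s → ¬ G.Adj (v 0) (v i) → G.Adj (v (n - 1)) (v i))
    (hy : ∀ i, d ≤ i → i < s → G.Adj (v (n - 1)) (v i)) : s ≤ j := by
  by_contra! hjs
  rcases lt_or_ge j d with hjd | hjd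
  · obtain rfl | hjd' : j + 1 = d ∨ j + 1 < d := by omega
    · exact hjx hdx
    have hY := hv.adj_last_of_le hn hG (a := j + 1) (b := d - 1) (by omega)
      (fun i _ _ => hS i (by omega) (by omega)) (hS (j + 1) (by omega) (by omega) hjx)
    exact hG (hv.isHamiltonian_of_adj_last_of_adj_first_succ hn (i := d - 1) (by omega)
      (hY (d - 1) (by omega) le_rfl) (by rwa [Nat.sub_add_cancel (by omega : 1 ≤ d)]))
  · exact hjy (hy j hjd (by omega))

theorem tough_le_one_of_common_neighbor_lt_nonneighbor [DecidableRel G.Adj] {t : ℝ} {d s : ℕ}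
    (hv : IsHamiltonianSeq G n v) (hn : 3 ≤ n) (hG : ¬ G.IsHamiltonian) (htough : Tough t G)
    (hdeg : G.degree (v 0) + G.degree (v (n - 1)) = n - 2) (hds : d < s) (hsn : s + 1 < n)
    (hdx : G.Adj (v 0) (v d)) (hdy : G.Adj (v (n - 1)) (v d))
    (hsy : ¬ G.Adj (v (n - 1)) (v s)) (hD : ∀ u, G.Adj (v 0) u → G.Adj (v (n - 1)) u → u = v d)
    (hS : ∀ u, u ≠ v 0 → u ≠ v (n - 1) → ¬ G.Adj (v 0) u → ¬ G.Adj (v (n - 1)) u → u = v s) :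
    t ≤ 1 := by
  obtain ⟨j, -, hjn, hjy, hjx, hcov⟩ := hv.exists_slack hn hG hdeg
  have hD' : ∀ i < n, i ≠ d → G.Adj (v 0) (v i) → ¬ G.Adj (v (n - 1)) (v i) :=
    fun i hi hid hx hy => hv.apply_ne_apply hi (by omega) hid (hD _ hx hy)
  have hS' : ∀ i, 0 < i → i + 1 < n → i ≠ s → ¬ G.Adj (v 0) (v i) → G.Adj (v (n - 1)) (v i) :=
    fun i h₀ hi his hx => by_contra fun hy => hv.apply_ne_apply (by omega) (by omega) his
      (hS _ (hv.apply_ne_apply (by omega) (by omega) h₀.ne')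
        (hv.apply_ne_apply (by omega) (by omega) (by omega)) hx hy)
  have hd₀ : 0 < d := Nat.pos_of_ne_zero (by rintro rfl; exact G.irrefl hdx)
  have hYd := hv.adj_last_of_le hn hG (a := d) (b := s - 1) (by omega)
    (fun i _ _ => hS' i (by omega) (by omega) (by omega)) hdy
  have hjs : s ≤ j := hv.le_of_slack hn hG hds (by omega) hdx hjy hjx
    (fun i h₀ hi => hS' i h₀ (by omega) (by omega)) fun i h₁ h₂ => hYd i h₁ (by omega)
  have hXd := adj_first_of_le (a := 1) (b := d) (fun i _ _ => hcov i (by omega) (by omega))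
    (fun i _ _ => hD' i (by omega) (by omega)) (hv.adj 0 (by omega))
  have hY := hv.adj_last_of_le hn hG (a := j + 1) (b := n - 2) (by omega)
    (fun i _ _ => hS' i (by omega) (by omega) (by omega))
    (hS' (j + 1) (by omega) (by omega) (by omega) hjx)
  obtain rfl | hsj := eq_or_lt_of_le hjs
  · refine hv.tough_le_one_of_adj_first_le_of_adj_last_gt hn hG htough (m := d) (c := s + 1) hd₀
      (by omega) (by omega) (fun i h₁ h₂ => hXd i h₁ h₂) fun k h₁ h₂ h₃ => ?_
    rcases le_or_gt k s with hks | hks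
    · exact hYd (k - 1) (by omega) (by omega)
    · exact hY (k - 1) (by omega) (by omega)
  · have hX := adj_first_of_le (a := s + 1) (b := j) (fun i _ _ => hcov i (by omega) (by omega))
      (fun i _ _ => hD' i (by omega) (by omega)) ((hcov s (by omega) (by omega)).resolve_left hsy)
    exact hv.tough_le_one_of_neighborSet_subset htough (by omega) hsn
      (hv.neighborSet_subset_pred_succ hn hG hds hsj (by omega) (fun i h₁ h₂ => hXd i h₁ h₂)
        (fun i h₁ h₂ => hYd i h₁ (by omega)) (fun i h₁ h₂ => hX i h₁ h₂)
        fun i h₁ h₂ => hY i h₁ (by omega))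

theorem tough_le_one_of_ncard_common_le_one [DecidableRel G.Adj] {t : ℝ} {x y : V}
    (hv : IsHamiltonianSeq G n v) (hn : 3 ≤ n) (hG : ¬ G.IsHamiltonian) (htough : Tough t G)
    (hx : v 0 = x) (hy : v (n - 1) = y) (hdeg : G.degree x + G.degree y = n - 2)
    (hD : (G.neighborSet x ∩ G.neighborSet y).ncard ≤ 1)
    (hSD : {w | w ≠ x ∧ w ≠ y ∧ ¬ G.Adj w x ∧ ¬ G.Adj w y}.ncard =
      (G.neighborSet x ∩ G.neighborSet y).ncard) : t ≤ 1 := by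
  subst hx hy
  rcases Nat.le_one_iff_eq_zero_or_eq_one.mp hD with h0 | h1
  · rw [h0, Set.ncard_eq_zero] at hSD
    rw [Set.ncard_eq_zero] at h0
    refine hv.tough_le_one_of_no_common_neighbor hn hG htough hdeg
      (fun u hx hy => h0.subset ⟨hx, hy⟩) fun u h₀ h₁ hx => by_contra fun hy => ?_
    exact hSD.subset ⟨h₀, h₁, fun h => hx h.symm, fun h => hy h.symm⟩
  obtain ⟨z, hz⟩ := Set.ncard_eq_one.mp h1
  obtain ⟨w, hw⟩ := Set.ncard_eq_one.mp (hSD.trans h1)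
  obtain ⟨d, hd, rfl⟩ := hv.surj z
  obtain ⟨s, hs, rfl⟩ := hv.surj w
  have hDu : ∀ u, G.Adj (v 0) u → G.Adj (v (n - 1)) u → u = v d := fun u hx hy => by
    have hu : u ∈ G.neighborSet (v 0) ∩ G.neighborSet (v (n - 1)) := ⟨hx, hy⟩
    rwa [hz, Set.mem_singleton_iff] at hu
  have hSu : ∀ u, u ≠ v 0 → u ≠ v (n - 1) → ¬ G.Adj (v 0) u → ¬ G.Adj (v (n - 1)) u → u = v s :=
    fun u h₀ h₁ hx hy => by
      have hu : u ∈ {w | w ≠ v 0 ∧ w ≠ v (n - 1) ∧ ¬ G.Adj w (v 0) ∧ ¬ G.Adj w (v (n - 1))} :=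
        ⟨h₀, h₁, fun h => hx h.symm, fun h => hy h.symm⟩
      rwa [hw, Set.mem_singleton_iff] at hu
  obtain ⟨hdx, hdy⟩ : v d ∈ G.neighborSet (v 0) ∩ G.neighborSet (v (n - 1)) := hz ▸ rfl
  obtain ⟨hs₀, hs₁, hsx, hsy⟩ :
      v s ∈ {w | w ≠ v 0 ∧ w ≠ v (n - 1) ∧ ¬ G.Adj w (v 0) ∧ ¬ G.Adj w (v (n - 1))} := hw ▸ rfl
  have hs0 : s ≠ 0 := by rintro rfl; exact hs₀ rfl
  have hsn : s ≠ n - 1 := by rintro rfl; exact hs₁ rfl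
  have hds : d ≠ s := by rintro rfl; exact hsx hdx.symm
  rcases lt_or_gt_of_ne hds with h | h
  · exact hv.tough_le_one_of_common_neighbor_lt_nonneighbor hn hG htough hdeg h (by omega) hdx hdy
      (fun h' => hsy h'.symm) hDu hSu
  · have e : ∀ i < n, n - 1 - (n - 1 - i) = i := fun i hi => by omega
    refine hv.reverse.tough_le_one_of_common_neighbor_lt_nonneighbor hn hG htough (d := n - 1 - d)
      (s := n - 1 - s) ?_ (by omega) (by omega) ?_ ?_ ?_ ?_ ?_ <;>
      simp only [Nat.sub_zero, Nat.sub_self, e d hd, e s hs]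
    · rw [Nat.sub_self]; omega
    · exact hdy
    · exact hdx
    · exact fun h' => hsx h'.symm
    · exact fun u h₁ h₂ => hDu u h₂ h₁
    · exact fun u h₀ h₁ h₂ h₃ => hSu u h₁ h₀ h₃ h₂

end IsHamiltonianSeq

end SimpleGraph

end

/-- Let `ε > 1/4` be a real number and let `G` be a `(2+ε)`-tough non-Hamiltonian
graph on `n ≥ 3` vertices possessing a Hamiltonian path from `x` to `y`, where `x` and
`y` are non-adjacent vertices with `d(x) + d(y) = n - 2`. Let `D = N(x) ∩ N(y)` and
let `S` be the set of vertices (other than `x` and `y`) adjacent to neither `x` nor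
`y`. Then `|S| = |D|` and `|D| ≥ 2`. -/
theorem stmt_14 {V : Type*} [Fintype V] [DecidableEq V]
    (ε : ℝ) (hε : 1 / 4 < ε)
    (hn : 3 ≤ Fintype.card V)
    (G : SimpleGraph V) [DecidableRel G.Adj]
    (htough : Tough (2 + ε) G) (hham : ¬ G.IsHamiltonian)
    (x y : V) (p : G.Walk x y) (hp : p.IsHamiltonian)
    (hxy : x ≠ y) (hnadj : ¬ G.Adj x y)
    (hdeg : G.degree x + G.degree y = Fintype.card V - 2)
    (D S : Set V)
    (hD : D = G.neighborSet x ∩ G.neighborSet y)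
    (hS : S = {w | w ≠ x ∧ w ≠ y ∧ ¬ G.Adj w x ∧ ¬ G.Adj w y}) :
    S.ncard = D.ncard ∧ 2 ≤ D.ncard := by
  subst hD hS
  have hSD := ncard_nonadj_add_degree_add_degree hxy hnadj
  refine ⟨by omega, ?_⟩
  by_contra! hD
  have := hp.isHamiltonianSeq.tough_le_one_of_ncard_common_le_one hn hham htough p.getVert_zero
    (by rw [← hp.length_eq]; exact p.getVert_length) hdeg (by omega) (by omega)
  linarith
end
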